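/- The ideal L(E≀Ω) of the free Lie algebra L(A) on A = {y₁,…,y_n, y_{n+1}}, where Ω = {y_{n+1}} ∪ {[y_{n+1},y_i] : i ∈ [n]} and E = ({y_{n+1}}≀Y) \ Ω, is an ideal of the whole free Lie algebra L(A) (not just of L({y_{n+1}}≀Y)). -/

import Mathlib

noncomputable section

/-- Left-normed iterated Lie bracket. -/
def leftNormed {L : Type*} [LieRing L] (x : L) (l : List L) : L :=
  l.foldl (fun u v => ⁅u, v⁆) x

/-- The wreath set `C ≀ B`. -/
def wreathSet {L : Type*} [LieRing L] (C B : Set L) : Set L :=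
  {x | ∃ c ∈ C, ∃ l : List L, (∀ b ∈ l, b ∈ B) ∧ x = leftNormed c l}

variable (n : ℕ)

/-- The generator `y_{n+1}` (denoted `s`). -/
def fpS : FreeLieAlgebra ℤ (Option (Fin n)) := FreeLieAlgebra.of ℤ none

/-- The generators `y i`, `i ∈ [n]`. -/
def fpY (i : Fin n) : FreeLieAlgebra ℤ (Option (Fin n)) := FreeLieAlgebra.of ℤ (some i)

/-- `Ω = {y_{n+1}} ∪ {[y_{n+1},y_i] : i ∈ [n]}`. -/
def fpOmega : Set (FreeLieAlgebra ℤ (Option (Fin n))) :=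
  insert (fpS n) {x | ∃ i : Fin n, x = ⁅fpS n, fpY n i⁆}

/-- `E = ({y_{n+1}}≀Y) \ Ω`, the wreath elements of degree at least `3`. -/
def fpE : Set (FreeLieAlgebra ℤ (Option (Fin n))) :=
  {x | ∃ l : List (Fin n), 2 ≤ l.length ∧ x = leftNormed (fpS n) (l.map (fpY n))}

/-!
`L(E≀Ω)` is an ideal as soon as its normalizer, which is a Lie subalgebra, contains the generators
of `L(A)`; and an element normalizes the Lie span of a set once it brackets that set into the span.
Every `ω ∈ Ω` normalizes, since `E≀Ω` is closed under right brackets with `Ω`. A generator `yⱼ`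
normalizes by induction along a left-normed word `[e, ω₁, …, ωₖ]`: `[e, yⱼ]` lies in `E`, and
`[yⱼ, ω]` lies in `±Ω` or `±E`, both of which normalize.
-/

open LieSubalgebra

theorem LieSubalgebra.mem_normalizer_lieSpan_iff {R L : Type*} [CommRing R] [LieRing L]
    [LieAlgebra R L] {s : Set L} {a : L} :
    a ∈ (lieSpan R L s).normalizer ↔ ∀ x ∈ s, ⁅a, x⁆ ∈ lieSpan R L s := by
  refine ⟨fun ha x hx => (mem_normalizer_iff _ a).1 ha x (subset_lieSpan hx), fun h => ?_⟩
  refine (mem_normalizer_iff _ a).2 fun y hy => ?_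
  induction hy using lieSpan_induction with
  | mem x hx => exact h x hx
  | zero => rw [lie_zero]; exact zero_mem _
  | add x y _ _ hx hy => rw [lie_add]; exact add_mem hx hy
  | smul t x _ hx => rw [lie_smul]; exact SMulMemClass.smul_mem t hx
  | lie x y hx' hy' hx hy =>
    rw [leibniz_lie]; exact add_mem (lie_mem _ hx hy') (lie_mem _ hx' hy)

theorem FreeLieAlgebra.lieSpan_range_of (R X : Type*) [CommRing R] :
    lieSpan R (FreeLieAlgebra R X) (Set.range (of R (X := X))) = ⊤ := by
  set K := lieSpan R (FreeLieAlgebra R X) (Set.range (of R (X := X)))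
  let F : FreeLieAlgebra R X →ₗ⁅R⁆ K := lift R fun x => ⟨of R x, subset_lieSpan ⟨x, rfl⟩⟩
  have hF : K.incl.comp F = LieHom.id := hom_ext fun x => by simp [F]
  refine eq_top_iff.2 fun a _ => ?_
  have ha : K.incl (F a) = a := by rw [← LieHom.comp_apply, hF, LieHom.id_apply]
  exact ha ▸ (F a).2

section Wreath

variable {L : Type*} [LieRing L]

theorem leftNormed_append_singleton (x : L) (l : List L) (b : L) :
    leftNormed x (l ++ [b]) = ⁅leftNormed x l, b⁆ := by
  simp [leftNormed, List.foldl_append]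

theorem subset_wreathSet (C B : Set L) : C ⊆ wreathSet C B :=
  fun c hc => ⟨c, hc, [], by simp, rfl⟩

theorem lie_mem_wreathSet {C B : Set L} {w b : L} (hw : w ∈ wreathSet C B) (hb : b ∈ B) :
    ⁅w, b⁆ ∈ wreathSet C B := by
  obtain ⟨c, hc, l, hl, rfl⟩ := hw
  refine ⟨c, hc, l ++ [b], fun x hx => ?_, (leftNormed_append_singleton c l b).symm⟩
  rcases List.mem_append.1 hx with hx | hx
  · exact hl x hx
  · exact List.mem_singleton.1 hx ▸ hb

theorem subset_normalizer_lieSpan_wreathSet (R : Type*) [CommRing R] [LieAlgebra R L]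
    (C B : Set L) : B ⊆ (lieSpan R L (wreathSet C B)).normalizer := by
  refine fun b hb => mem_normalizer_lieSpan_iff.2 fun w hw => ?_
  rw [← lie_skew]
  exact neg_mem (subset_lieSpan (lie_mem_wreathSet hw hb))

end Wreath

abbrev fpWreathSpan : LieSubalgebra ℤ (FreeLieAlgebra ℤ (Option (Fin n))) :=
  lieSpan ℤ _ (wreathSet (fpE n) (fpOmega n))

theorem lie_fpY_mem_fpE {e : FreeLieAlgebra ℤ (Option (Fin n))} (he : e ∈ fpE n) (j : Fin n) :
    ⁅e, fpY n j⁆ ∈ fpE n := by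
  obtain ⟨m, hm, rfl⟩ := he
  exact ⟨m ++ [j], by simp; omega, by simp [leftNormed_append_singleton]⟩

theorem fpOmega_subset_normalizer : fpOmega n ⊆ (fpWreathSpan n).normalizer :=
  subset_normalizer_lieSpan_wreathSet ℤ _ _

theorem lie_fpY_mem_normalizer_of_mem_fpOmega (j : Fin n)
    {ω : FreeLieAlgebra ℤ (Option (Fin n))} (hω : ω ∈ fpOmega n) :
    ⁅fpY n j, ω⁆ ∈ (fpWreathSpan n).normalizer := by
  rw [← lie_skew]
  refine neg_mem ?_
  rcases hω with rfl | ⟨i, rfl⟩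
  · exact fpOmega_subset_normalizer n (Or.inr ⟨j, rfl⟩)
  · exact le_normalizer _ (subset_lieSpan (subset_wreathSet _ _ ⟨[i, j], by simp, rfl⟩))

theorem fpY_mem_normalizer (j : Fin n) : fpY n j ∈ (fpWreathSpan n).normalizer := by
  rw [mem_normalizer_lieSpan_iff]
  rintro _ ⟨e, he, l, hl, rfl⟩
  induction l using List.reverseRecOn with
  | nil =>
    rw [← lie_skew]
    exact neg_mem (subset_lieSpan (subset_wreathSet _ _ (lie_fpY_mem_fpE n he j)))
  | append_singleton l ω ih =>
    have hω : ω ∈ fpOmega n := hl ω (by simp)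
    have hl' : ∀ b ∈ l, b ∈ fpOmega n := fun b hb => hl b (by simp [hb])
    have hw : leftNormed e l ∈ fpWreathSpan n := subset_lieSpan ⟨e, he, l, hl', rfl⟩
    rw [leftNormed_append_singleton, leibniz_lie]
    exact add_mem ((mem_normalizer_iff' _ _).1 (fpOmega_subset_normalizer n hω) _ (ih hl'))
      ((mem_normalizer_iff' _ _).1 (lie_fpY_mem_normalizer_of_mem_fpOmega n j hω) _ hw)

theorem fpWreathSpan_normalizer_eq_top : (fpWreathSpan n).normalizer = ⊤ := by
  refine eq_top_iff.2 fun z _ => ?_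
  -- `lieSpan ℤ _` uses the `ℤ`-Lie algebra structure of an arbitrary Lie ring, which agrees with
  -- the free one only up to unfolding, so the spanning lemma is applied through membership.
  have hz : z ∈ lieSpan ℤ _ (Set.range (FreeLieAlgebra.of ℤ)) :=
    (FreeLieAlgebra.lieSpan_range_of ℤ (Option (Fin n))).ge trivial
  refine lieSpan_le.2 ?_ hz
  rintro _ ⟨none | j, rfl⟩
  · exact fpOmega_subset_normalizer n (Set.mem_insert _ _)
  · exact fpY_mem_normalizer n j

theorem wreath_subalgebra_is_ideal
    (z : FreeLieAlgebra ℤ (Option (Fin n))) (x : FreeLieAlgebra ℤ (Option (Fin n)))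
    (hx : x ∈ LieSubalgebra.lieSpan ℤ _ (wreathSet (fpE n) (fpOmega n))) :
    ⁅z, x⁆ ∈ LieSubalgebra.lieSpan ℤ _ (wreathSet (fpE n) (fpOmega n)) := by
  have hz : z ∈ (fpWreathSpan n).normalizer := by
    rw [fpWreathSpan_normalizer_eq_top]; trivial
  exact (mem_normalizer_iff _ z).1 hz x hx

end
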